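/- Let K ⊆ ℝ be a subfield and f ∈ K[X] irreducible of odd prime degree with at least two real roots and at least one nonreal root. Then f is not solvable by radicals over K. -/

import Mathlib

/-!
If the roots of `f` lay in a radical extension of `K`, the Galois group of `f` would be solvable
(Abel–Ruffini). In a solvable group acting faithfully and transitively on `p` points, the last
nontrivial term of the derived series is abelian and, the action being primitive, acts regularly;
it is therefore cyclic of order `p`, and an element fixing two points centralizes it and so acts
trivially. But complex conjugation restricts to an element of the Galois group fixing the two real
roots and moving the nonreal one.
-/

open Polynomial

/-- `F'` is a simple radical extension of `F` of prime exponent. -/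
def IsSimpleRadicalExt (F F' : Subfield ℂ) : Prop :=
  ∃ (α : ℂ) (q : ℕ), q.Prime ∧ α ^ q ∈ F ∧ F' = Subfield.closure (↑F ∪ {α})

/-- `L` is a radical extension of `K`: there is a finite tower of simple radical
extensions from `K` to `L`. -/
def IsRadicalExt (K L : Subfield ℂ) : Prop :=
  ∃ (n : ℕ) (c : Fin (n + 1) → Subfield ℂ), c 0 = K ∧ c (Fin.last n) = L ∧
    ∀ i : Fin n, IsSimpleRadicalExt (c i.castSucc) (c i.succ)

open MulAction

section

variable {G X : Type*} [Group G] [MulAction G X]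

open scoped commutatorElement in
theorem Group.IsSolvable.exists_normal_isMulCommutative_ne_bot [Group.IsSolvable G]
    [Nontrivial G] :
    ∃ N : Subgroup G, N.Normal ∧ IsMulCommutative N ∧ N ≠ ⊥ := by
  classical
  have hex : ∃ k, derivedSeries G k = ⊥ := Group.IsSolvable.solvable
  obtain ⟨m, hm⟩ : ∃ m, Nat.find hex = m + 1 := by
    refine Nat.exists_eq_add_one_of_ne_zero fun h0 => ?_
    have htop := Nat.find_spec hex
    rw [h0, derivedSeries_zero] at htop
    exact top_ne_bot htop
  have hbot : derivedSeries G (m + 1) = ⊥ := hm ▸ Nat.find_spec hex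
  refine ⟨derivedSeries G m, derivedSeries_normal G m, ⟨⟨fun x y => Subtype.ext ?_⟩⟩,
    Nat.find_min hex (by omega)⟩
  have hxy : ⁅(x : G), (y : G)⁆ ∈ derivedSeries G (m + 1) :=
    Subgroup.commutator_mem_commutator x.2 y.2
  rw [hbot, Subgroup.mem_bot, commutatorElement_eq_one_iff_mul_comm] at hxy
  exact hxy

namespace MulAction

theorem isCancelSMul_of_isMulCommutative {H : Type*} [Group H] [IsMulCommutative H]
    [MulAction H X] [IsPretransitive H X] [FaithfulSMul H X] : IsCancelSMul H X := by
  refine isCancelSMul_iff_eq_one_of_smul_eq.mpr fun h x hx => ?_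
  refine (faithfulSMul_iff (G := H) (α := X)).mp inferInstance h fun y => ?_
  obtain ⟨k, rfl⟩ := exists_smul_eq H x y
  rw [smul_smul, mul_comm' h k, mul_smul, hx]

theorem exists_normal_isMulCommutative_isPretransitive_of_prime_card [Group.IsSolvable G]
    [Nontrivial G] [IsPretransitive G X] [FaithfulSMul G X] (hX : (Nat.card X).Prime) :
    ∃ N : Subgroup G, N.Normal ∧ IsMulCommutative N ∧ IsPretransitive N X := by
  obtain ⟨N, hN, hcomm, hbot⟩ := Group.IsSolvable.exists_normal_isMulCommutative_ne_bot (G := G)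
  have : IsPreprimitive G X := .of_prime_card hX
  refine ⟨N, hN, hcomm, IsQuasiPreprimitive.isPretransitive_of_normal fun hfix => ?_⟩
  obtain ⟨u, hu⟩ := (Subgroup.ne_bot_iff_exists_ne_one (H := N)).mp hbot
  refine hu ((faithfulSMul_iff (G := ↥N) (α := X)).mp inferInstance u fun x => ?_)
  exact (Set.eq_univ_iff_forall.mp hfix x) u

theorem eq_one_of_smul_eq_self_of_prime_card [Group.IsSolvable G] [IsPretransitive G X]
    [FaithfulSMul G X] (hX : (Nat.card X).Prime) {g : G} {a b : X} (hab : a ≠ b)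
    (ha : g • a = a) (hb : g • b = b) : g = 1 := by
  cases subsingleton_or_nontrivial G
  · exact Subsingleton.elim g 1
  obtain ⟨N, hN, _, _⟩ := exists_normal_isMulCommutative_isPretransitive_of_prime_card (G := G) hX
  have : IsCancelSMul N X := isCancelSMul_of_isMulCommutative
  have hcard : Nat.card N = Nat.card X := by
    rw [← index_stabilizer_of_transitive N a, IsCancelSMul.stabilizer_eq_bot, Subgroup.index_bot]
  obtain ⟨m, hm⟩ := exists_smul_eq N a b
  have hm1 : m ≠ 1 := by
    rintro rfl
    exact hab (one_smul N a ▸ hm)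
  have hconj : g * m * g⁻¹ = m := by
    have hmem : g * m * g⁻¹ ∈ N := hN.conj_mem m m.2 g
    refine congrArg Subtype.val (IsCancelSMul.right_cancel (⟨_, hmem⟩ : N) m a ?_)
    rw [Subgroup.mk_smul, mul_smul, mul_smul, inv_smul_eq_iff.mpr ha.symm, ← Subgroup.smul_def,
      hm, hb]
  have hcomm : ∀ n : N, Commute g n := by
    intro n
    have : Fact (Nat.card X).Prime := ⟨hX⟩
    obtain ⟨j, rfl⟩ := Subgroup.mem_zpowers_iff.mp (mem_zpowers_of_prime_card hcard hm1 (g' := n))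
    rw [Subgroup.coe_zpow]
    exact Commute.zpow_right (mul_inv_eq_iff_eq_mul.mp hconj) j
  refine (faithfulSMul_iff (G := G) (α := X)).mp inferInstance g fun x => ?_
  obtain ⟨n, rfl⟩ := exists_smul_eq N a x
  rw [Subgroup.smul_def, smul_smul, (hcomm n).eq, mul_smul, ha]

end MulAction

end

theorem IsSimpleRadicalExt.le_solvableByRad {E : Type*} [Field E] [Algebra E ℂ]
    {F F' : Subfield ℂ} (h : IsSimpleRadicalExt F F') (hF : F ≤ (solvableByRad E ℂ).toSubfield) :
    F' ≤ (solvableByRad E ℂ).toSubfield := by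
  obtain ⟨α, q, hq, hαq, rfl⟩ := h
  refine Subfield.closure_le.mpr (Set.union_subset hF ?_)
  rintro _ rfl
  exact solvableByRad.rad_mem hq.ne_zero (hF hαq)

theorem IsRadicalExt.le_solvableByRad {K L : Subfield ℂ} (h : IsRadicalExt K L) :
    L ≤ (solvableByRad K ℂ).toSubfield := by
  obtain ⟨n, c, rfl, rfl, hc⟩ := h
  suffices ∀ i, c i ≤ (solvableByRad (c 0) ℂ).toSubfield from this _
  intro i
  induction i using Fin.induction with
  | zero => exact fun x hx => (solvableByRad (c 0) ℂ).algebraMap_mem ⟨x, hx⟩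
  | succ i ih => exact (hc i).le_solvableByRad ih

noncomputable def conjAlgEquivOfReal (K : Subfield ℂ) (hK : ∀ x ∈ K, x.im = 0) : ℂ ≃ₐ[K] ℂ :=
  AlgEquiv.ofRingEquiv (f := starRingAut) fun x => Complex.conj_eq_iff_im.mpr (hK x x.2)

theorem Polynomial.Gal.restrict_conjAlgEquivOfReal_smul_eq_self_iff {K : Subfield ℂ}
    (hK : ∀ x ∈ K, x.im = 0) (f : K[X]) [Fact ((f.map (algebraMap K ℂ)).Splits)]
    (z : f.rootSet ℂ) : Gal.restrict f ℂ (conjAlgEquivOfReal K hK) • z = z ↔ (z : ℂ).im = 0 := by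
  rw [← Complex.conj_eq_iff_im, Subtype.ext_iff, Gal.restrict_smul]
  rfl

theorem not_solvable_by_radicals_general (K : Subfield ℂ) (hKreal : ∀ x ∈ K, x.im = 0)
    (f : K[X]) (p : ℕ) (hp : p.Prime) (hdeg : f.natDegree = p)
    (hirr : Irreducible f)
    (htwo : ∃ z w : ℂ, z ∈ f.rootSet ℂ ∧ w ∈ f.rootSet ℂ ∧ z ≠ w ∧
      z.im = 0 ∧ w.im = 0)
    (hnonreal : ∃ z ∈ f.rootSet ℂ, z.im ≠ 0) :
    ¬ ∃ L : Subfield ℂ, IsRadicalExt K L ∧ ∀ z ∈ f.rootSet ℂ, z ∈ L := by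
  rintro ⟨L, hKL, hroots⟩
  obtain ⟨z, w, hz, hw, hzw, hzim, hwim⟩ := htwo
  obtain ⟨v, hv, hvim⟩ := hnonreal
  have : Fact ((f.map (algebraMap K ℂ)).Splits) := ⟨IsAlgClosed.splits _⟩
  have : Group.IsSolvable f.Gal :=
    isSolvable_gal_of_irreducible (hKL.le_solvableByRad (hroots z hz)) hirr (mem_rootSet.mp hz).2
  have : IsPretransitive f.Gal (f.rootSet ℂ) := Gal.galAction_isPretransitive f ℂ hirr
  have : FaithfulSMul f.Gal (f.rootSet ℂ) :=
    ⟨fun h => Gal.galActionHom_injective f ℂ (Equiv.ext h)⟩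
  have hcard : Nat.card (f.rootSet ℂ) = p := by
    rw [Nat.card_eq_fintype_card, card_rootSet_eq_natDegree hirr.separable (IsAlgClosed.splits _),
      hdeg]
  have hconj := Gal.restrict_conjAlgEquivOfReal_smul_eq_self_iff hKreal f
  have hconj_eq_one : Gal.restrict f ℂ (conjAlgEquivOfReal K hKreal) = 1 :=
    eq_one_of_smul_eq_self_of_prime_card (hcard ▸ hp) (a := ⟨z, hz⟩) (b := ⟨w, hw⟩)
      (ne_of_apply_ne Subtype.val hzw) ((hconj _).mpr hzim) ((hconj _).mpr hwim)
  exact hvim ((hconj ⟨v, hv⟩).mp (hconj_eq_one ▸ one_smul _ _))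

/-- Let `K` be a subfield of the reals (viewed inside `ℂ`) and `f ∈ K[X]` irreducible
of odd prime degree with at least two real roots and at least one nonreal root. Then
`f` is not solvable by radicals over `K`. -/
theorem not_solvable_by_radicals (K : Subfield ℂ) (hKreal : ∀ x ∈ K, x.im = 0)
    (f : K[X]) (p : ℕ) (hp : p.Prime) (hodd : Odd p) (hdeg : f.natDegree = p)
    (hirr : Irreducible f)
    (htwo : ∃ z w : ℂ, z ∈ f.rootSet ℂ ∧ w ∈ f.rootSet ℂ ∧ z ≠ w ∧
      z.im = 0 ∧ w.im = 0)
    (hnonreal : ∃ z ∈ f.rootSet ℂ, z.im ≠ 0) :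
    ¬ ∃ L : Subfield ℂ, IsRadicalExt K L ∧ ∀ z ∈ f.rootSet ℂ, z ∈ L :=
  not_solvable_by_radicals_general K hKreal f p hp hdeg hirr htwo hnonreal
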